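/- Define ω : 𝒬 → ℝ on the space 𝒬 of real symmetric traceless 3×3 matrices by ω(B) = ln ∫_{𝕊²} exp(m·Bm) dσ(m). Then ω is convex on 𝒬. Moreover, for every Q ∈ 𝒬_phy, letting B_Q be a symmetric traceless matrix with ∫_{𝕊²} (m mᵀ − I/3) f_{B_Q}(m) dσ(m) = Q, one has B_Q : Q − ω(B_Q) = sup_{B ∈ 𝒬} (B : Q − ω(B)), i.e. the Legendre transform of ω at Q is attained at B = B_Q. (Here B : Q = Σ_{i,j} B_{ij} Q_{ij}.) -/

import Mathlib

/-!
The inequality `eˣ ≥ 1 + x`, integrated against the Bingham density `f_A`, shows that `ω` lies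
above each of its tangent planes: `ω(B) ≥ ω(A) + ∫ (m·(B − A)m) f_A dσ`. Averaging the two tangent
inequalities at `aA + bB` (the slope terms cancel by linearity in `B − A`) gives convexity. At
`A = B_Q` with `B − B_Q` traceless, the slope is `(B − B_Q) : Q` by the moment condition, so
`B : Q − ω(B) ≤ B_Q : Q − ω(B_Q)`.
-/

open MeasureTheory Real

noncomputable section

abbrev E3 : Type := EuclideanSpace ℝ (Fin 3)
abbrev S2 : Type := Metric.sphere (0 : E3) 1
abbrev Mat3 : Type := Matrix (Fin 3) (Fin 3) ℝ

/-- The standard (rotation-invariant) surface measure on 𝕊², of total mass 4π. -/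
noncomputable def sigma3 : Measure S2 := (volume : Measure E3).toSphere

/-- The quadratic form `m · B m` for `m ∈ 𝕊²`. -/
noncomputable def quadForm (B : Mat3) (m : S2) : ℝ :=
  ∑ i, ∑ j, (m : E3) i * B i j * (m : E3) j

/-- The Bingham partition function `Z_B = ∫ exp(m·Bm) dσ(m)`. -/
noncomputable def ZB (B : Mat3) : ℝ := ∫ m : S2, Real.exp (quadForm B m) ∂sigma3

/-- The Bingham density `f_B(m) = exp(m·Bm)/Z_B`. -/
noncomputable def bingham (B : Mat3) (m : S2) : ℝ := Real.exp (quadForm B m) / ZB B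

/-- The traceless second moment `∫ (m mᵀ − I/3) f dσ` of a density `f` on 𝕊². -/
noncomputable def secondMoment (f : S2 → ℝ) : Mat3 :=
  Matrix.of fun i j =>
    ∫ m : S2, ((m : E3) i * (m : E3) j - (if i = j then (1 : ℝ) / 3 else 0)) * f m ∂sigma3

/-- `Q ∈ 𝒬_phy`: symmetric, traceless, with all eigenvalues in `(−1/3, 2/3)`. -/
def Qphy (Q : Mat3) : Prop :=
  Q.IsSymm ∧ Q.trace = 0 ∧ ∀ μ ∈ spectrum ℝ Q, -(1 / 3 : ℝ) < μ ∧ μ < 2 / 3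

/-- `ω(B) = ln ∫ exp(m·Bm) dσ(m)`. -/
noncomputable def omegaFn (B : Mat3) : ℝ := Real.log (ZB B)

/-- The Frobenius pairing `B : Q = Σ B_{ij} Q_{ij}`. -/
noncomputable def frob (B Q : Mat3) : ℝ := ∑ i, ∑ j, B i j * Q i j

open Set

section LogIntegralExp

variable {α : Type*} [MeasurableSpace α] {μ : Measure α} [NeZero μ] {g h : α → ℝ}

theorem log_integral_exp_add_mean_le (hg : Integrable (fun x => exp (g x)) μ)
    (hhg : Integrable (fun x => h x * exp (g x)) μ)
    (hgh : Integrable (fun x => exp (g x + h x)) μ) :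
    log (∫ x, exp (g x) ∂μ) + (∫ x, h x * exp (g x) ∂μ) / ∫ x, exp (g x) ∂μ ≤
      log (∫ x, exp (g x + h x) ∂μ) := by
  set Z := ∫ x, exp (g x) ∂μ
  set c := (∫ x, h x * exp (g x) ∂μ) / Z
  have hZ : 0 < Z := integral_exp_pos hg
  have hpt : ∀ x, exp c * ((h x - c + 1) * exp (g x)) ≤ exp (g x + h x) := fun x =>
    calc exp c * ((h x - c + 1) * exp (g x))
        ≤ exp c * (exp (h x - c) * exp (g x)) := by
          gcongr
          linarith [add_one_le_exp (h x - c)]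
      _ = exp (g x + h x) := by rw [← exp_add, ← exp_add]; ring_nf
  have hsplit : (fun x => exp c * ((h x - c + 1) * exp (g x))) =
      fun x => exp c * (h x * exp (g x)) + exp c * (1 - c) * exp (g x) := by
    funext x; ring
  have hlin : Integrable (fun x => exp c * ((h x - c + 1) * exp (g x))) μ := by
    rw [hsplit]; exact (hhg.const_mul _).add (hg.const_mul _)
  have hmass : ∫ x, exp c * ((h x - c + 1) * exp (g x)) ∂μ = exp c * Z := by
    have hcZ : ∫ x, h x * exp (g x) ∂μ = c * Z := (div_mul_cancel₀ _ hZ.ne').symm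
    rw [hsplit, integral_add (hhg.const_mul _) (hg.const_mul _), integral_const_mul,
      integral_const_mul, hcZ]
    ring
  calc log Z + c = log (exp c * Z) := by rw [log_mul (exp_pos c).ne' hZ.ne', log_exp]; ring
    _ ≤ log (∫ x, exp (g x + h x) ∂μ) :=
      log_le_log (by positivity) (hmass ▸ integral_mono hlin hgh hpt)

end LogIntegralExp

instance : IsFiniteMeasure sigma3 := by unfold sigma3; infer_instance

instance : NeZero sigma3 := by
  have : Nonempty S2 := (NormedSpace.sphere_nonempty.2 zero_le_one).to_subtype
  unfold sigma3; infer_instance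

@[fun_prop]
theorem continuous_sphere_coord (i : Fin 3) : Continuous fun m : S2 => (m : E3) i :=
  (continuous_apply i).comp ((PiLp.continuous_ofLp 2 _).comp continuous_subtype_val)

@[fun_prop]
theorem continuous_quadForm (B : Mat3) : Continuous (quadForm B) := by
  unfold quadForm; fun_prop

theorem integrable_sigma3_of_continuous {f : S2 → ℝ} (hf : Continuous f) : Integrable f sigma3 :=
  hf.integrable_of_hasCompactSupport (HasCompactSupport.of_compactSpace f)

@[fun_prop]
theorem continuous_bingham (B : Mat3) : Continuous (bingham B) := by
  unfold bingham; fun_prop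

theorem quadForm_add (A B : Mat3) (m : S2) :
    quadForm (A + B) m = quadForm A m + quadForm B m := by
  simp only [quadForm, ← Finset.sum_add_distrib, Matrix.add_apply, mul_add, add_mul]

theorem quadForm_smul (c : ℝ) (B : Mat3) (m : S2) : quadForm (c • B) m = c * quadForm B m := by
  simp only [quadForm, Finset.mul_sum, Matrix.smul_apply, smul_eq_mul]
  exact Finset.sum_congr rfl fun _ _ => Finset.sum_congr rfl fun _ _ => by ring

theorem quadForm_sub (A B : Mat3) (m : S2) :
    quadForm (A - B) m = quadForm A m - quadForm B m := by
  rw [sub_eq_add_neg, quadForm_add, ← neg_one_smul ℝ B, quadForm_smul]; ring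

theorem omegaFn_add_mean_le (A B : Mat3) :
    omegaFn A + ∫ m, quadForm (B - A) m * bingham A m ∂sigma3 ≤ omegaFn B := by
  have h := log_integral_exp_add_mean_le (μ := sigma3) (g := quadForm A) (h := quadForm (B - A))
    (integrable_sigma3_of_continuous (by fun_prop)) (integrable_sigma3_of_continuous (by fun_prop))
    (integrable_sigma3_of_continuous (by fun_prop))
  simpa only [omegaFn, ZB, bingham, quadForm_sub, add_sub_cancel, ← integral_div, mul_div_assoc]
    using h

theorem convexOn_omegaFn : ConvexOn ℝ univ omegaFn := by
  refine ⟨convex_univ, fun A _ B _ a b ha hb hab => ?_⟩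
  set C := a • A + b • B
  have hA := omegaFn_add_mean_le C A
  have hB := omegaFn_add_mean_le C B
  have hslopes : a * ∫ m, quadForm (A - C) m * bingham C m ∂sigma3 +
      b * ∫ m, quadForm (B - C) m * bingham C m ∂sigma3 = 0 := by
    rw [← integral_const_mul, ← integral_const_mul,
      ← integral_add (integrable_sigma3_of_continuous (by fun_prop))
        (integrable_sigma3_of_continuous (by fun_prop))]
    refine integral_eq_zero_of_ae (Filter.Eventually.of_forall fun m => ?_)
    simp only [C, quadForm_sub, quadForm_add, quadForm_smul, Pi.zero_apply]
    linear_combination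
      -(a * quadForm A m + b * quadForm B m) * bingham (a • A + b • B) m * hab
  have hsplitC : omegaFn C = a * omegaFn C + b * omegaFn C := by rw [← add_mul, hab, one_mul]
  simp only [smul_eq_mul]
  linarith [mul_le_mul_of_nonneg_left hA ha, mul_le_mul_of_nonneg_left hB hb]

theorem integral_quadForm_mul_eq_frob_secondMoment {D : Mat3} (hD : D.trace = 0) {f : S2 → ℝ}
    (hf : Continuous f) :
    ∫ m, quadForm D m * f m ∂sigma3 = frob D (secondMoment f) := by
  have hpt : ∀ m : S2, quadForm D m * f m = ∑ i, ∑ j,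
      D i j * (((m : E3) i * (m : E3) j - if i = j then (1 : ℝ) / 3 else 0) * f m) := by
    intro m
    -- the `I/3` part of the moment pairs with `D` to `trace D / 3 = 0`
    have htr : ∑ i, D i i = 0 := hD
    simp only [mul_sub, sub_mul, Finset.sum_sub_distrib, mul_ite, ite_mul, mul_zero, zero_mul,
      Finset.sum_ite_eq, Finset.mem_univ, if_true, ← Finset.sum_mul, htr, sub_zero, quadForm]
    simp only [Finset.sum_mul]
    refine Finset.sum_congr rfl fun _ _ => Finset.sum_congr rfl fun _ _ => by ring
  simp only [hpt]
  rw [integral_finsetSum _ fun i _ => integrable_sigma3_of_continuous (by fun_prop)]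
  refine Finset.sum_congr rfl fun i _ => ?_
  rw [integral_finsetSum _ fun j _ => integrable_sigma3_of_continuous (by fun_prop)]
  exact Finset.sum_congr rfl fun j _ => integral_const_mul _ _

theorem frob_sub_left (A B Q : Mat3) : frob (A - B) Q = frob A Q - frob B Q := by
  simp only [frob, ← Finset.sum_sub_distrib, Matrix.sub_apply, sub_mul]

theorem frob_sub_omegaFn_le_of_secondMoment_eq {B BQ Q : Mat3} (hB : B.trace = 0)
    (hBQ : BQ.trace = 0) (hQ : secondMoment (bingham BQ) = Q) :
    frob B Q - omegaFn B ≤ frob BQ Q - omegaFn BQ := by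
  have h := omegaFn_add_mean_le BQ B
  rw [integral_quadForm_mul_eq_frob_secondMoment (by rw [Matrix.trace_sub, hB, hBQ, sub_zero])
    (continuous_bingham BQ), hQ, frob_sub_left] at h
  linarith

theorem convex_isSymm_trace_eq_zero : Convex ℝ {B : Mat3 | B.IsSymm ∧ B.trace = 0} :=
  fun A hA B hB a b _ _ _ => ⟨(hA.1.smul a).add (hB.1.smul b), by
    simp [Matrix.trace_add, Matrix.trace_smul, hA.2, hB.2]⟩

/-- `ω` is convex on the space 𝒬 of symmetric traceless matrices; and for `Q ∈ 𝒬_phy`,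
if `B_Q ∈ 𝒬` has `∫ (m mᵀ − I/3) f_{B_Q} dσ = Q` then
`B_Q : Q − ω(B_Q) = sup_{B ∈ 𝒬} (B : Q − ω(B))`, i.e. the Legendre transform of `ω` at
`Q` is attained at `B_Q`. -/
theorem stmt13 :
    ConvexOn ℝ {B : Mat3 | B.IsSymm ∧ B.trace = 0} omegaFn ∧
    ∀ Q : Mat3, Qphy Q →
      ∀ BQ : Mat3, BQ.IsSymm → BQ.trace = 0 → secondMoment (bingham BQ) = Q →
        IsGreatest {x : ℝ | ∃ B : Mat3, B.IsSymm ∧ B.trace = 0 ∧ x = frob B Q - omegaFn B}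
          (frob BQ Q - omegaFn BQ) := by
  refine ⟨convexOn_omegaFn.subset (subset_univ _) convex_isSymm_trace_eq_zero,
    fun Q _ BQ hBQsymm hBQ hQ => ⟨⟨BQ, hBQsymm, hBQ, rfl⟩, ?_⟩⟩
  rintro _ ⟨B, -, hB, rfl⟩
  exact frob_sub_omegaFn_le_of_secondMoment_eq hB hBQ hQ
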